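/- Let m \ge 2 and k \ge 1 be integers. Then \int_0^1 (\sin(\pi m t)/\sin(\pi t))^{2k} dt \le 2^{2k+1} m^{4k^2/(2k+1)}. -/

import Mathlib

/-!
The ratio `sin (π m t) / sin (π t)` is bounded by `m` everywhere (`|sin (n x)| ≤ n |sin x|`) and by
`ε⁻¹` on `[ε/2, 1 - ε/2]` (Jordan's inequality `sin (π t) ≥ 2 min t (1 - t)`). Splitting the
integral accordingly bounds it by `ε m^(2k) + ε^(-2k)`, and `ε = m^(-2k/(2k+1))` makes both terms
equal to `m^(4k²/(2k+1))`.
-/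

open Real MeasureTheory Set intervalIntegral

lemma abs_sin_nat_mul_le (n : ℕ) (x : ℝ) : |sin (n * x)| ≤ n * |sin x| := by
  induction n with
  | zero => simp
  | succ n ih =>
    calc |sin ((n + 1 : ℕ) * x)| = |sin (n * x) * cos x + cos (n * x) * sin x| := by
          rw [Nat.cast_succ, add_one_mul, sin_add]
      _ ≤ |sin (n * x)| * |cos x| + |cos (n * x)| * |sin x| := by
          rw [← abs_mul, ← abs_mul]; exact abs_add_le _ _
      _ ≤ |sin (n * x)| * 1 + 1 * |sin x| := by
          gcongr <;> exact abs_cos_le_one _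
      _ ≤ (n + 1 : ℕ) * |sin x| := by push_cast; linarith

lemma two_mul_min_le_sin_pi_mul {t : ℝ} (ht₀ : 0 ≤ t) (ht₁ : t ≤ 1) :
    2 * min t (1 - t) ≤ sin (π * t) := by
  have jordan : ∀ s, 0 ≤ s → s ≤ 1 / 2 → 2 * s ≤ sin (π * s) := fun s hs₀ hs₁ => by
    simpa [← mul_assoc, div_mul_cancel₀] using le_sin_mul (x := 2 * s) (by linarith) (by linarith)
  rcases le_total t (1 / 2) with h | h
  · exact (mul_le_mul_of_nonneg_left (min_le_left _ _) zero_le_two).trans (jordan t ht₀ h)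
  · calc 2 * min t (1 - t) ≤ 2 * (1 - t) := by gcongr; exact min_le_right _ _
      _ ≤ sin (π * (1 - t)) := jordan (1 - t) (by linarith) (by linarith)
      _ = sin (π * t) := by rw [mul_one_sub, sin_pi_sub]

lemma abs_sin_pi_nat_mul_div_sin_pi_le (m : ℕ) (t : ℝ) :
    |sin (π * m * t) / sin (π * t)| ≤ m := by
  rcases eq_or_ne (sin (π * t)) 0 with h | h
  · simp [h]
  · rw [abs_div, div_le_iff₀ (abs_pos.mpr h), mul_comm π (m : ℝ), mul_assoc]
    exact abs_sin_nat_mul_le m (π * t)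

lemma abs_sin_pi_nat_mul_div_sin_pi_le_inv (m : ℕ) {ε t : ℝ} (hε : 0 < ε)
    (ht : t ∈ Icc (ε / 2) (1 - ε / 2)) :
    |sin (π * m * t) / sin (π * t)| ≤ ε⁻¹ := by
  have hsin : ε ≤ sin (π * t) := by
    calc ε = 2 * min (ε / 2) (1 - (1 - ε / 2)) := by rw [sub_sub_cancel, min_self]; ring
      _ ≤ 2 * min t (1 - t) := by gcongr <;> linarith [ht.1, ht.2]
      _ ≤ sin (π * t) := two_mul_min_le_sin_pi_mul (by linarith [ht.1]) (by linarith [ht.2])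
  rw [abs_div, abs_of_pos (hε.trans_le hsin), div_le_iff₀ (hε.trans_le hsin)]
  calc |sin (π * m * t)| ≤ 1 := abs_sin_le_one _
    _ = ε⁻¹ * ε := (inv_mul_cancel₀ hε.ne').symm
    _ ≤ ε⁻¹ * sin (π * t) := by gcongr

lemma integral_le_of_le_of_le_on_subinterval {f : ℝ → ℝ} {a a' b' b A B : ℝ} (ha : a ≤ a')
    (hab : a' ≤ b') (hb : b' ≤ b) (hf : IntervalIntegrable f volume a b)
    (hA : ∀ t ∈ Icc a b, f t ≤ A) (hB : ∀ t ∈ Icc a' b', f t ≤ B) :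
    ∫ t in a..b, f t ≤ (a' - a) * A + (b' - a') * B + (b - b') * A := by
  have hab' : a ≤ b := ha.trans (hab.trans hb)
  have hsub : ∀ {c d}, c ∈ Icc a b → d ∈ Icc a b → IntervalIntegrable f volume c d :=
    fun hc hd => hf.mono_set <|
      uIcc_subset_uIcc (by rwa [uIcc_of_le hab']) (by rwa [uIcc_of_le hab'])
  have ha' : a' ∈ Icc a b := ⟨ha, hab.trans hb⟩
  have hb' : b' ∈ Icc a b := ⟨ha.trans hab, hb⟩
  have hleft := hsub ⟨le_rfl, hab'⟩ ha'
  have hmid := hsub ha' hb'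
  have hright := hsub hb' ⟨hab', le_rfl⟩
  rw [← integral_add_adjacent_intervals (hleft.trans hmid) hright,
    ← integral_add_adjacent_intervals hleft hmid]
  gcongr
  · calc ∫ t in a..a', f t ≤ ∫ _ in a..a', A :=
          integral_mono_on ha hleft intervalIntegrable_const
            fun t ht => hA t ⟨ht.1, ht.2.trans ha'.2⟩
      _ = (a' - a) * A := by simp
  · calc ∫ t in a'..b', f t ≤ ∫ _ in a'..b', B :=
          integral_mono_on hab hmid intervalIntegrable_const hB
      _ = (b' - a') * B := by simp
  · calc ∫ t in b'..b, f t ≤ ∫ _ in b'..b, A :=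
          integral_mono_on hb hright intervalIntegrable_const
            fun t ht => hA t ⟨hb'.1.trans ht.1, ht.2⟩
      _ = (b - b') * A := by simp

theorem integral_sin_pi_nat_mul_div_sin_pi_pow_le (m k : ℕ) {ε : ℝ} (hε₀ : 0 < ε) (hε₁ : ε ≤ 1) :
    ∫ t in (0 : ℝ)..1, (sin (π * m * t) / sin (π * t)) ^ (2 * k) ≤
      ε * m ^ (2 * k) + ε⁻¹ ^ (2 * k) := by
  set D : ℝ → ℝ := fun t => sin (π * m * t) / sin (π * t)
  have hpow : ∀ {t C : ℝ}, |D t| ≤ C → D t ^ (2 * k) ≤ C ^ (2 * k) := fun h =>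
    (even_two_mul k).pow_abs (D _) ▸ pow_le_pow_left₀ (abs_nonneg _) h _
  have hint : IntervalIntegrable (fun t => D t ^ (2 * k)) volume 0 1 := by
    refine (intervalIntegrable_const (c := (m : ℝ) ^ (2 * k))).mono_fun
      (Measurable.aestronglyMeasurable (by fun_prop)) (ae_of_all _ fun t => ?_)
    simpa [abs_pow] using pow_le_pow_left₀ (abs_nonneg _) (abs_sin_pi_nat_mul_div_sin_pi_le m t) _
  have hsplit := integral_le_of_le_of_le_on_subinterval (a := 0) (a' := ε / 2)
    (b' := 1 - ε / 2) (b := 1) (by linarith) (by linarith) (by linarith) hint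
    (fun t _ => hpow (abs_sin_pi_nat_mul_div_sin_pi_le m t))
    (fun t ht => hpow (abs_sin_pi_nat_mul_div_sin_pi_le_inv m hε₀ ht))
  have : 0 ≤ ε * ε⁻¹ ^ (2 * k) := by positivity
  linarith

theorem fejer_integral_upper_bound_general (m k : ℕ) (hm : 2 ≤ m) :
    (∫ t in (0:ℝ)..1, (Real.sin (Real.pi * m * t) / Real.sin (Real.pi * t)) ^ (2 * k)) ≤
      2 ^ (2 * k + 1) * (m : ℝ) ^ ((4 * (k : ℝ) ^ 2) / (2 * k + 1)) := by
  have hm₁ : (1 : ℝ) ≤ m := by exact_mod_cast one_le_two.trans hm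
  have hm₀ : (0 : ℝ) < m := one_pos.trans_le hm₁
  set ε : ℝ := (m : ℝ) ^ (-(2 * k / (2 * k + 1) : ℝ)) with hε
  have hε₀ : 0 < ε := rpow_pos_of_pos hm₀ _
  have hε₁ : ε ≤ 1 := rpow_le_one_of_one_le_of_nonpos hm₁ (neg_nonpos.mpr (by positivity))
  have hleft : ε * m ^ (2 * k) = (m : ℝ) ^ ((4 * (k : ℝ) ^ 2) / (2 * k + 1)) := by
    rw [← rpow_natCast, ← rpow_add hm₀]
    congr 1
    push_cast
    field_simp
    ring
  have hright : ε⁻¹ ^ (2 * k) = (m : ℝ) ^ ((4 * (k : ℝ) ^ 2) / (2 * k + 1)) := by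
    rw [hε, rpow_neg hm₀.le, inv_inv, ← rpow_natCast, ← rpow_mul hm₀.le]
    congr 1
    push_cast
    field_simp
    ring
  calc _ ≤ ε * m ^ (2 * k) + ε⁻¹ ^ (2 * k) :=
        integral_sin_pi_nat_mul_div_sin_pi_pow_le m k hε₀ hε₁
    _ = 2 ^ 1 * (m : ℝ) ^ ((4 * (k : ℝ) ^ 2) / (2 * k + 1)) := by rw [hleft, hright]; ring
    _ ≤ _ := by gcongr <;> norm_num

theorem fejer_integral_upper_bound (m k : ℕ) (hm : 2 ≤ m) (hk : 1 ≤ k) :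
    (∫ t in (0:ℝ)..1, (Real.sin (Real.pi * m * t) / Real.sin (Real.pi * t)) ^ (2 * k)) ≤
      2 ^ (2 * k + 1) * (m : ℝ) ^ ((4 * (k : ℝ) ^ 2) / (2 * k + 1)) :=
  fejer_integral_upper_bound_general m k hm
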